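/- arXiv:1204.3235 — 3 statements merged into one kernel-verified Lean document; each statement's English description precedes it below -/
import Mathlib

section
/- Let n ≥ 1, a > 0, and let φ₀ : ℝⁿ → ℝ be a bounded continuous integrable function. Define, for t < 0 and x ∈ ℝⁿ, f(x, t) = (−4πa²t)^{−n/2} ∫_{ℝⁿ} φ₀(η) · exp(−‖η − x‖² / (−4a²t)) dη, where ‖η − x‖² = Σ_{i=1}^n (η_i − x_i)². Then for every x ∈ ℝⁿ and every t < 0, f satisfies the n-dimensional anti-diffusion equation ∂f/∂t (x, t) + a² Δf(x, t) = 0, where Δf = Σ_{i=1}^n ∂²f/∂x_i² is the Laplacian of f in the spatial variable. -/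
/-!
Write `w_b(x, η) = exp (-‖η - x‖² / b)`. Pointwise in `η` this weight solves
`Δₓ w = 4 ∂_b w - (2n / b) w`, and every derivative involved is a polynomial in `η - x` times
`w`, hence bounded uniformly in `η`; since `φ₀` is integrable, differentiation under the integral
sign transfers the identity to `I(x, b) = ∫ φ₀ η w_b(x, η) dη`. With `b = -4a²t` and the
prefactor `c(t) = (-4πa²t)^(-n/2)`, which satisfies `c' = -(n / 2t) c`, the chain rule turns it
into `∂ₜ(c I) + a² Δₓ(c I) = 0`.
-/

open MeasureTheory Real Filter Topology Function

theorem mul_exp_neg_div_le (s : ℝ) {b : ℝ} (hb : 0 < b) : s * exp (-s / b) ≤ b := by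
  have h := mul_exp_neg_le_exp_neg_one (s / b)
  rw [← neg_div, div_mul_eq_mul_div, div_le_iff₀ hb] at h
  calc s * exp (-s / b) ≤ exp (-1) * b := h
    _ ≤ b := mul_le_of_le_one_left hb.le (exp_le_one_iff.2 (by norm_num))

theorem abs_mul_exp_neg_sq_div_le {p u b A B : ℝ} (hb : 0 < b) (hA : 0 ≤ A) (hB : 0 ≤ B)
    (hp : |p| ≤ A + B * u ^ 2) : |p| * exp (-u ^ 2 / b) ≤ A + B * b := by
  have hexp : exp (-u ^ 2 / b) ≤ 1 :=
    exp_le_one_iff.2 (div_nonpos_of_nonpos_of_nonneg (neg_nonpos.2 (sq_nonneg u)) hb.le)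
  calc |p| * exp (-u ^ 2 / b) ≤ (A + B * u ^ 2) * exp (-u ^ 2 / b) := by gcongr
    _ = A * exp (-u ^ 2 / b) + B * (u ^ 2 * exp (-u ^ 2 / b)) := by ring
    _ ≤ A * 1 + B * b := by
      gcongr
      exact mul_exp_neg_div_le _ hb
    _ = A + B * b := by ring

theorem hasDerivAt_integral_mul_of_bounded {α : Type*} [MeasurableSpace α] {μ : Measure α}
    {φ : α → ℝ} (hφ : Integrable φ μ) {k k' : ℝ → α → ℝ} {p₀ C : ℝ} {s : Set ℝ}
    (hs : s ∈ 𝓝 p₀) (hk_meas : ∀ p ∈ s, AEStronglyMeasurable (k p) μ)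
    (hk_int : Integrable (fun η => φ η * k p₀ η) μ) (hk'_meas : AEStronglyMeasurable (k' p₀) μ)
    (hk' : ∀ p ∈ s, ∀ η, ‖k' p η‖ ≤ C) (hk : ∀ p ∈ s, ∀ η, HasDerivAt (k · η) (k' p η) p) :
    Integrable (fun η => φ η * k' p₀ η) μ ∧
      HasDerivAt (fun p => ∫ η, φ η * k p η ∂μ) (∫ η, φ η * k' p₀ η ∂μ) p₀ :=
  hasDerivAt_integral_of_dominated_loc_of_deriv_le (bound := fun η => ‖φ η‖ * C) hs
    (eventually_of_mem hs fun p hp => hφ.aestronglyMeasurable.mul (hk_meas p hp)) hk_int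
    (hφ.aestronglyMeasurable.mul hk'_meas)
    (ae_of_all _ fun η p hp => by rw [norm_mul]; gcongr; exact hk' p hp η)
    (hφ.norm.mul_const C) (ae_of_all _ fun η p hp => (hk p hp η).const_mul (φ η))

section GaussWeight

variable {ι : Type*} [Fintype ι]

noncomputable def gaussWeight (b : ℝ) (x η : ι → ℝ) : ℝ :=
  exp (-(∑ i, (η i - x i) ^ 2) / b)

noncomputable def gaussConv (μ : Measure (ι → ℝ)) (φ : (ι → ℝ) → ℝ) (b : ℝ) (x : ι → ℝ) : ℝ :=
  ∫ η, φ η * gaussWeight b x η ∂μ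

theorem continuous_gaussWeight (b : ℝ) (x : ι → ℝ) : Continuous (gaussWeight b x) := by
  unfold gaussWeight; fun_prop

theorem gaussWeight_nonneg (b : ℝ) (x η : ι → ℝ) : 0 ≤ gaussWeight b x η :=
  (exp_pos _).le

theorem gaussWeight_le_one {b : ℝ} (hb : 0 ≤ b) (x η : ι → ℝ) : gaussWeight b x η ≤ 1 :=
  exp_le_one_iff.2 <| div_nonpos_of_nonpos_of_nonneg
    (neg_nonpos.2 (Finset.sum_nonneg fun _ _ => sq_nonneg _)) hb

theorem hasDerivAt_gaussWeight_scale {b : ℝ} (hb : b ≠ 0) (x η : ι → ℝ) :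
    HasDerivAt (fun b => gaussWeight b x η)
      (gaussWeight b x η * ((∑ i, (η i - x i) ^ 2) / b ^ 2)) b := by
  have h := (hasDerivAt_inv hb).const_mul (-(∑ i, (η i - x i) ^ 2))
  exact (h.congr_deriv (by ring)).exp

variable [DecidableEq ι]

theorem sum_sq_sub_update (x η : ι → ℝ) (i : ι) (y : ℝ) :
    ∑ j, (η j - update x i y j) ^ 2 =
      (η i - y) ^ 2 + ∑ j ∈ Finset.univ.erase i, (η j - x j) ^ 2 := by
  rw [← Finset.add_sum_erase _ _ (Finset.mem_univ i), update_self]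
  congr 1
  exact Finset.sum_congr rfl fun j hj => by rw [update_of_ne (Finset.ne_of_mem_erase hj)]

theorem gaussWeight_update_le {b : ℝ} (hb : 0 < b) (x η : ι → ℝ) (i : ι) (y : ℝ) :
    gaussWeight b (update x i y) η ≤ exp (-(η i - y) ^ 2 / b) := by
  rw [gaussWeight, sum_sq_sub_update, exp_le_exp, div_le_div_iff_of_pos_right hb]
  linarith [Finset.sum_nonneg fun j (_ : j ∈ Finset.univ.erase i) => sq_nonneg (η j - x j)]

theorem hasDerivAt_gaussWeight_update (b : ℝ) (x η : ι → ℝ) (i : ι) (y : ℝ) :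
    HasDerivAt (fun y => gaussWeight b (update x i y) η)
      (gaussWeight b (update x i y) η * (2 * (η i - y) / b)) y := by
  simp only [gaussWeight, sum_sq_sub_update]
  have h := ((((hasDerivAt_id y).const_sub (η i)).pow 2).add_const
    (∑ j ∈ Finset.univ.erase i, (η j - x j) ^ 2)).neg.div_const b
  exact (h.congr_deriv (by push_cast; simp only [id]; ring)).exp

theorem norm_gaussWeight_update_mul_le {b A B p : ℝ} (hb : 0 < b) (hA : 0 ≤ A) (hB : 0 ≤ B)
    (x η : ι → ℝ) (i : ι) (y : ℝ) (hp : |p| ≤ A + B * (η i - y) ^ 2) :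
    ‖gaussWeight b (update x i y) η * p‖ ≤ A + B * b := by
  rw [norm_mul, norm_of_nonneg (gaussWeight_nonneg _ _ _), norm_eq_abs, mul_comm]
  calc |p| * gaussWeight b (update x i y) η ≤ |p| * exp (-(η i - y) ^ 2 / b) := by
        gcongr; exact gaussWeight_update_le hb x η i y
    _ ≤ A + B * b := abs_mul_exp_neg_sq_div_le hb hA hB hp

theorem hasDerivAt_gaussWeight_update_mul (b : ℝ) (x η : ι → ℝ) (i : ι) (y : ℝ) :
    HasDerivAt (fun y => gaussWeight b (update x i y) η * (2 * (η i - y) / b))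
      (gaussWeight b (update x i y) η * ((2 * (η i - y) / b) ^ 2 - 2 / b)) y := by
  have h := (hasDerivAt_gaussWeight_update b x η i y).mul
    ((((hasDerivAt_id y).const_sub (η i)).const_mul 2).div_const b)
  exact h.congr_deriv (by simp only [id]; ring)

end GaussWeight

section GaussConv

variable {ι : Type*} [Fintype ι] {μ : Measure (ι → ℝ)} {φ : (ι → ℝ) → ℝ} {b : ℝ}

theorem integrable_mul_gaussWeight (hφ : Integrable φ μ) (hb : 0 ≤ b) (x : ι → ℝ) :
    Integrable (fun η => φ η * gaussWeight b x η) μ :=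
  hφ.mul_bdd (continuous_gaussWeight b x).aestronglyMeasurable <| ae_of_all _ fun η => by
    rw [norm_of_nonneg (gaussWeight_nonneg b x η)]; exact gaussWeight_le_one hb x η

theorem hasDerivAt_gaussConv_scale (hφ : Integrable φ μ) (hb : 0 < b) (x : ι → ℝ) :
    Integrable (fun η => φ η * (gaussWeight b x η * ((∑ i, (η i - x i) ^ 2) / b ^ 2))) μ ∧
      HasDerivAt (fun b => gaussConv μ φ b x)
        (∫ η, φ η * (gaussWeight b x η * ((∑ i, (η i - x i) ^ 2) / b ^ 2)) ∂μ) b := by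
  have hs : Set.Ioi (b / 2) ∈ 𝓝 b := Ioi_mem_nhds (half_lt_self hb)
  refine hasDerivAt_integral_mul_of_bounded hφ hs
    (fun p _ => (continuous_gaussWeight p x).aestronglyMeasurable)
    (integrable_mul_gaussWeight hφ hb.le x)
    ((continuous_gaussWeight b x).mul (by fun_prop)).aestronglyMeasurable (C := 2 / b) ?_
    fun p hp η => hasDerivAt_gaussWeight_scale (by linarith [hp.out, half_pos hb]) x η
  intro p hp η
  have hp0 : 0 < p := by linarith [hp.out, half_pos hb]
  set S := ∑ i, (η i - x i) ^ 2
  rw [norm_of_nonneg (mul_nonneg (gaussWeight_nonneg p x η) (by positivity))]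
  calc gaussWeight p x η * (S / p ^ 2) = S * exp (-S / p) / p / p := by rw [gaussWeight]; ring
    _ ≤ p / p / p := by gcongr; exact mul_exp_neg_div_le S hp0
    _ = 1 / p := by field_simp
    _ ≤ 2 / b := by rw [div_le_div_iff₀ hp0 hb]; linarith [hp.out]

variable [DecidableEq ι]

theorem hasDerivAt_gaussConv_update (hφ : Integrable φ μ) (hb : 0 < b) (x : ι → ℝ) (i : ι)
    (y : ℝ) :
    Integrable (fun η => φ η * (gaussWeight b (update x i y) η * (2 * (η i - y) / b))) μ ∧
      HasDerivAt (fun y => gaussConv μ φ b (update x i y))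
        (∫ η, φ η * (gaussWeight b (update x i y) η * (2 * (η i - y) / b)) ∂μ) y := by
  refine hasDerivAt_integral_mul_of_bounded hφ Filter.univ_mem
    (fun p _ => (continuous_gaussWeight b _).aestronglyMeasurable)
    (integrable_mul_gaussWeight hφ hb.le _)
    ((continuous_gaussWeight b _).mul (by fun_prop)).aestronglyMeasurable
    (fun p _ η => norm_gaussWeight_update_mul_le (A := 1 / b) (B := 1 / b) hb (by positivity)
      (by positivity) x η i p ?_)
    fun p _ η => hasDerivAt_gaussWeight_update b x η i p
  rw [abs_div, abs_of_pos hb, abs_mul, abs_two, div_le_iff₀ hb]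
  field_simp
  nlinarith [sq_abs (η i - p), sq_nonneg (|η i - p| - 1)]

theorem hasDerivAt_integral_gaussWeight_update_mul (hφ : Integrable φ μ) (hb : 0 < b)
    (x : ι → ℝ) (i : ι) (y : ℝ) :
    Integrable (fun η =>
        φ η * (gaussWeight b (update x i y) η * ((2 * (η i - y) / b) ^ 2 - 2 / b))) μ ∧
      HasDerivAt (fun y => ∫ η, φ η * (gaussWeight b (update x i y) η * (2 * (η i - y) / b)) ∂μ)
        (∫ η, φ η * (gaussWeight b (update x i y) η * ((2 * (η i - y) / b) ^ 2 - 2 / b)) ∂μ)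
        y := by
  refine hasDerivAt_integral_mul_of_bounded hφ Filter.univ_mem
    (fun p _ => ((continuous_gaussWeight b _).mul (by fun_prop)).aestronglyMeasurable)
    (hasDerivAt_gaussConv_update hφ hb x i y).1
    ((continuous_gaussWeight b _).mul (by fun_prop)).aestronglyMeasurable
    (fun p _ η => norm_gaussWeight_update_mul_le (A := 2 / b) (B := 4 / b ^ 2) hb
      (by positivity) (by positivity) x η i p ?_)
    fun p _ η => hasDerivAt_gaussWeight_update_mul b x η i p
  calc |(2 * (η i - p) / b) ^ 2 - 2 / b| ≤ |(2 * (η i - p) / b) ^ 2| + |2 / b| := abs_sub _ _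
    _ = 2 / b + 4 / b ^ 2 * (η i - p) ^ 2 := by
      rw [abs_of_nonneg (sq_nonneg _), abs_of_pos (by positivity)]; ring

theorem iteratedDeriv_two_gaussConv_update (hφ : Integrable φ μ) (hb : 0 < b) (x : ι → ℝ)
    (i : ι) :
    iteratedDeriv 2 (fun y => gaussConv μ φ b (update x i y)) (x i) =
      ∫ η, φ η * (gaussWeight b x η * ((2 * (η i - x i) / b) ^ 2 - 2 / b)) ∂μ := by
  have hderiv : deriv (fun y => gaussConv μ φ b (update x i y)) =
      fun y => ∫ η, φ η * (gaussWeight b (update x i y) η * (2 * (η i - y) / b)) ∂μ :=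
    funext fun y => (hasDerivAt_gaussConv_update hφ hb x i y).2.deriv
  rw [iteratedDeriv_succ, iteratedDeriv_one, hderiv,
    (hasDerivAt_integral_gaussWeight_update_mul hφ hb x i (x i)).2.deriv, update_eq_self]

theorem sum_iteratedDeriv_two_gaussConv_update (hφ : Integrable φ μ) (hb : 0 < b) (x : ι → ℝ) :
    ∑ i, iteratedDeriv 2 (fun y => gaussConv μ φ b (update x i y)) (x i) =
      4 * deriv (fun b => gaussConv μ φ b x) b - 2 * Fintype.card ι / b * gaussConv μ φ b x := by
  obtain ⟨hint_scale, hscale⟩ := hasDerivAt_gaussConv_scale hφ hb x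
  have hint_coord (i : ι) : Integrable (fun η =>
      φ η * (gaussWeight b x η * ((2 * (η i - x i) / b) ^ 2 - 2 / b))) μ := by
    simpa only [update_eq_self] using (hasDerivAt_integral_gaussWeight_update_mul hφ hb x i (x i)).1
  have hpointwise (η : ι → ℝ) :
      ∑ i, φ η * (gaussWeight b x η * ((2 * (η i - x i) / b) ^ 2 - 2 / b)) =
        4 * (φ η * (gaussWeight b x η * ((∑ i, (η i - x i) ^ 2) / b ^ 2))) -
          2 * Fintype.card ι / b * (φ η * gaussWeight b x η) := by
    simp only [← Finset.mul_sum, Finset.sum_sub_distrib, Finset.sum_const, Finset.card_univ,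
      nsmul_eq_mul, div_pow, mul_pow, ← Finset.sum_div]
    ring
  rw [Finset.sum_congr rfl fun i _ => iteratedDeriv_two_gaussConv_update hφ hb x i, hscale.deriv,
    gaussConv, ← integral_finsetSum _ fun i _ => hint_coord i,
    integral_congr_ae (ae_of_all _ hpointwise),
    integral_sub (hint_scale.const_mul 4) ((integrable_mul_gaussWeight hφ hb.le x).const_mul _),
    integral_const_mul, integral_const_mul]

end GaussConv

theorem antidiffusion_n_dim_general (n : ℕ) (a : ℝ) (ha : 0 < a)
    (φ₀ : (Fin n → ℝ) → ℝ)
    (hint : Integrable φ₀)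
    (f : (Fin n → ℝ) → ℝ → ℝ)
    (hf : ∀ x t, t < 0 → f x t =
      (-4 * π * a ^ 2 * t) ^ (-(n : ℝ) / 2) *
        ∫ η : Fin n → ℝ,
          φ₀ η * Real.exp (-(∑ i, (η i - x i) ^ 2) / (-4 * a ^ 2 * t))) :
    ∀ (x : Fin n → ℝ) (t : ℝ), t < 0 →
      deriv (fun s => f x s) t +
        a ^ 2 * ∑ i, iteratedDeriv 2 (fun y => f (Function.update x i y) t) (x i)
      = 0 := by
  intro x t ht
  have hb : 0 < -4 * a ^ 2 * t := by nlinarith [pow_pos ha 2]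
  have hc : 0 < -4 * π * a ^ 2 * t := by nlinarith [pi_pos]
  have htime : (fun s => f x s) =ᶠ[𝓝 t] fun s =>
      (-4 * π * a ^ 2 * s) ^ (-(n : ℝ) / 2) * gaussConv volume φ₀ (-4 * a ^ 2 * s) x :=
    eventually_of_mem (Iio_mem_nhds ht) fun s hs => hf x s hs
  have hspace (i : Fin n) : (fun y => f (update x i y) t) = fun y =>
      (-4 * π * a ^ 2 * t) ^ (-(n : ℝ) / 2) * gaussConv volume φ₀ (-4 * a ^ 2 * t) (update x i y) :=
    funext fun y => hf _ t ht
  have hprefactor := (hasDerivAt_rpow_const (p := -(n : ℝ) / 2) (Or.inl hc.ne')).comp t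
    ((hasDerivAt_id t).const_mul (-4 * π * a ^ 2))
  have hconv := (hasDerivAt_gaussConv_scale hint hb x).2.differentiableAt.hasDerivAt.comp t
    ((hasDerivAt_id t).const_mul (-4 * a ^ 2))
  have hderiv : HasDerivAt (fun s =>
      (-4 * π * a ^ 2 * s) ^ (-(n : ℝ) / 2) * gaussConv volume φ₀ (-4 * a ^ 2 * s) x) _ t :=
    hprefactor.mul hconv
  rw [htime.deriv_eq, hderiv.deriv]
  simp only [hspace, iteratedDeriv_const_mul_field, ← Finset.mul_sum,
    sum_iteratedDeriv_two_gaussConv_update hint hb, Fintype.card_fin, rpow_sub_one hc.ne',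
    comp_apply]
  field_simp
  ring

/-- For `n ≥ 1`, `a > 0`, and bounded continuous integrable `φ₀ : ℝⁿ → ℝ`,
the function `f(x,t) = (−4πa²t)^{−n/2} ∫ φ₀(η) exp(−‖η−x‖²/(−4a²t)) dη`, where
`‖η−x‖² = Σᵢ (ηᵢ−xᵢ)²`, satisfies the n-dimensional anti-diffusion equation
`∂f/∂t + a² Δf = 0` at every `x ∈ ℝⁿ` and `t < 0`, where `Δf = Σᵢ ∂²f/∂xᵢ²`. -/
theorem antidiffusion_n_dim (n : ℕ) (hn : 1 ≤ n) (a : ℝ) (ha : 0 < a)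
    (φ₀ : (Fin n → ℝ) → ℝ)
    (hbdd : ∃ C, ∀ x, |φ₀ x| ≤ C) (hcont : Continuous φ₀) (hint : Integrable φ₀)
    (f : (Fin n → ℝ) → ℝ → ℝ)
    (hf : ∀ x t, t < 0 → f x t =
      (-4 * π * a ^ 2 * t) ^ (-(n : ℝ) / 2) *
        ∫ η : Fin n → ℝ,
          φ₀ η * Real.exp (-(∑ i, (η i - x i) ^ 2) / (-4 * a ^ 2 * t))) :
    ∀ (x : Fin n → ℝ) (t : ℝ), t < 0 →
      deriv (fun s => f x s) t +
        a ^ 2 * ∑ i, iteratedDeriv 2 (fun y => f (Function.update x i y) t) (x i)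
      = 0 :=
  antidiffusion_n_dim_general n a ha φ₀ hint f hf
end

section
/- Let n ≥ 1, a > 0, and let φ₀ : ℝⁿ → ℝ be a bounded continuous integrable function. Define, for t < 0 and x ∈ ℝⁿ, f(x, t) = (−4πa²t)^{−n/2} ∫_{ℝⁿ} φ₀(η) exp(−‖η − x‖²/(−4a²t)) dη. Then for every x ∈ ℝⁿ, f(x, t) → φ₀(x) as t → 0 from the left, so the solution attains the initial condition f(·, 0) = φ₀. -/
/-!
After translating by `x` and rescaling by `√(-4a²t)`, `f(x, t)` becomes
`π^{-n/2} ∫ φ₀(√(-4a²t) z + x) exp(-‖z‖²) dz`. As `t → 0⁻` the integrand converges pointwise to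
`φ₀(x) exp(-‖z‖²)` and is dominated by `C exp(-‖z‖²)`, so dominated convergence and
`∫ exp(-‖z‖²) dz = π^{n/2}` give the limit `φ₀(x)`.
-/

open MeasureTheory Real Filter Topology

variable {ι : Type*} [Fintype ι]

lemma exp_neg_sum_sq_eq_prod (z : ι → ℝ) :
    exp (-∑ i, z i ^ 2) = ∏ i, exp (-(z i ^ 2)) := by
  rw [← Finset.sum_neg_distrib, exp_sum]

lemma integrable_exp_neg_sum_sq : Integrable fun z : ι → ℝ => exp (-∑ i, z i ^ 2) := by
  simp_rw [exp_neg_sum_sq_eq_prod]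
  exact Integrable.fintype_prod (f := fun _ u => exp (-(u ^ 2))) fun _ => by
    simpa using integrable_exp_neg_mul_sq one_pos

lemma integral_exp_neg_sum_sq :
    ∫ z : ι → ℝ, exp (-∑ i, z i ^ 2) = π ^ ((Fintype.card ι : ℝ) / 2) := by
  simp_rw [exp_neg_sum_sq_eq_prod]
  rw [volume_pi, integral_fintype_prod_eq_pow (fun u : ℝ => exp (-(u ^ 2))),
    show ∫ u : ℝ, exp (-(u ^ 2)) = √π by simpa using integral_gaussian 1,
    sqrt_eq_rpow, ← rpow_natCast, ← rpow_mul pi_pos.le]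
  ring_nf

lemma sqrt_pow_eq_rpow {c : ℝ} (hc : 0 ≤ c) (n : ℕ) : √c ^ n = c ^ ((n : ℝ) / 2) := by
  rw [sqrt_eq_rpow, ← rpow_natCast, ← rpow_mul hc]
  ring_nf

lemma integral_mul_exp_neg_sum_sq_div (φ : (ι → ℝ) → ℝ) (x : ι → ℝ) {c : ℝ} (hc : 0 < c) :
    ∫ η, φ η * exp (-(∑ i, (η i - x i) ^ 2) / c) =
      c ^ ((Fintype.card ι : ℝ) / 2) * ∫ z, φ (√c • z + x) * exp (-∑ i, z i ^ 2) := by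
  have hs : 0 < √c := sqrt_pos.2 hc
  have hscale := Measure.integral_comp_inv_smul_of_nonneg (volume : Measure (ι → ℝ))
    (fun z => φ (√c • z + x) * exp (-∑ i, z i ^ 2)) hs.le
  rw [Module.finrank_fintype_fun_eq_card, smul_eq_mul, sqrt_pow_eq_rpow hc.le] at hscale
  rw [← hscale, ← integral_add_right_eq_self _ x]
  congr 1 with y
  simp only [Pi.add_apply, add_sub_cancel_right, smul_inv_smul₀ hs.ne', Pi.smul_apply,
    smul_eq_mul, mul_pow, inv_pow, sq_sqrt hc.le, ← Finset.mul_sum]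
  ring_nf

lemma tendsto_integral_comp_smul_add_mul_exp_neg_sum_sq {φ : (ι → ℝ) → ℝ} (hφ : Continuous φ)
    {C : ℝ} (hC : ∀ y, |φ y| ≤ C) (x : ι → ℝ) :
    Tendsto (fun s : ℝ => ∫ z, φ (s • z + x) * exp (-∑ i, z i ^ 2)) (𝓝 0)
      (𝓝 (π ^ ((Fintype.card ι : ℝ) / 2) * φ x)) := by
  rw [← integral_exp_neg_sum_sq, mul_comm, ← integral_const_mul]
  refine tendsto_integral_filter_of_dominated_convergence (fun z => C * exp (-∑ i, z i ^ 2))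
    (Eventually.of_forall fun s => by fun_prop) (Eventually.of_forall fun s => ?_)
    (integrable_exp_neg_sum_sq.const_mul C) (ae_of_all _ fun z => ?_)
  · refine ae_of_all _ fun z => ?_
    rw [norm_mul, norm_of_nonneg (exp_pos _).le, norm_eq_abs]
    exact mul_le_mul_of_nonneg_right (hC _) (exp_pos _).le
  · have : Tendsto (fun s : ℝ => s • z + x) (𝓝 0) (𝓝 x) := by
      simpa using ((tendsto_id (x := 𝓝 (0 : ℝ))).smul_const z).add_const x
    exact ((hφ.tendsto x).comp this).mul_const _

theorem antidiffusion_n_dim_initial_condition_general (n : ℕ) (a : ℝ) (ha : 0 < a)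
    (φ₀ : (Fin n → ℝ) → ℝ)
    (hbdd : ∃ C, ∀ x, |φ₀ x| ≤ C) (hcont : Continuous φ₀)
    (f : (Fin n → ℝ) → ℝ → ℝ)
    (hf : ∀ x t, t < 0 → f x t =
      (-4 * π * a ^ 2 * t) ^ (-(n : ℝ) / 2) *
        ∫ η : Fin n → ℝ,
          φ₀ η * Real.exp (-(∑ i, (η i - x i) ^ 2) / (-4 * a ^ 2 * t))) :
    ∀ x : Fin n → ℝ, Tendsto (fun t => f x t) (𝓝[<] (0 : ℝ)) (𝓝 (φ₀ x)) := by
  intro x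
  obtain ⟨C, hC⟩ := hbdd
  have hsqrt : Tendsto (fun t : ℝ => √(-4 * a ^ 2 * t)) (𝓝[<] 0) (𝓝 0) := by
    simpa using ((by fun_prop : Continuous fun t : ℝ => √(-4 * a ^ 2 * t)).tendsto 0).mono_left
      nhdsWithin_le_nhds
  have hlim := ((tendsto_integral_comp_smul_add_mul_exp_neg_sum_sq hcont hC x).comp
    hsqrt).const_mul (π ^ (-(n : ℝ) / 2))
  rw [Fintype.card_fin, ← mul_assoc, ← rpow_add pi_pos, neg_div, neg_add_cancel, rpow_zero,
    one_mul] at hlim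
  refine hlim.congr' ?_
  filter_upwards [self_mem_nhdsWithin] with t ht
  have hc : 0 < -4 * a ^ 2 * t := by nlinarith [pow_pos ha 2, Set.mem_Iio.1 ht]
  rw [hf x t ht, integral_mul_exp_neg_sum_sq_div _ _ hc, Fintype.card_fin,
    show -4 * π * a ^ 2 * t = π * (-4 * a ^ 2 * t) by ring, mul_rpow pi_pos.le hc.le, neg_div,
    rpow_neg hc.le, mul_assoc, inv_mul_cancel_left₀ (rpow_pos_of_pos hc _).ne', Function.comp_apply]

/-- For `n ≥ 1`, `a > 0`, and bounded continuous integrable `φ₀ : ℝⁿ → ℝ`,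
the anti-diffusion solution `f(x,t) = (−4πa²t)^{−n/2} ∫ φ₀(η) exp(−‖η−x‖²/(−4a²t)) dη`
(for `t < 0`) attains the initial condition: for every `x`, `f(x,t) → φ₀(x)` as `t → 0⁻`. -/
theorem antidiffusion_n_dim_initial_condition (n : ℕ) (hn : 1 ≤ n) (a : ℝ) (ha : 0 < a)
    (φ₀ : (Fin n → ℝ) → ℝ)
    (hbdd : ∃ C, ∀ x, |φ₀ x| ≤ C) (hcont : Continuous φ₀) (hint : Integrable φ₀)
    (f : (Fin n → ℝ) → ℝ → ℝ)
    (hf : ∀ x t, t < 0 → f x t =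
      (-4 * π * a ^ 2 * t) ^ (-(n : ℝ) / 2) *
        ∫ η : Fin n → ℝ,
          φ₀ η * Real.exp (-(∑ i, (η i - x i) ^ 2) / (-4 * a ^ 2 * t))) :
    ∀ x : Fin n → ℝ, Tendsto (fun t => f x t) (𝓝[<] (0 : ℝ)) (𝓝 (φ₀ x)) :=
  antidiffusion_n_dim_initial_condition_general n a ha φ₀ hbdd hcont f hf
end

section
/- Let a > 0 and let f : ℝ × I → ℝ (I an open interval of times) be positive and smooth, with f(·, t) a probability density for each t ∈ I, satisfying the anti-diffusion equation ∂f/∂t + a² ∂²f/∂x² = 0 on ℝ × I. Assume that for each t ∈ I: f(·,t) log f(·,t), (1 + log f(·,t))·∂²f/∂x²(·,t), and (∂f/∂x(·,t))²/f(·,t) are integrable; (1 + log f(x,t))·∂f/∂x(x,t) → 0 as x → ±∞; and differentiation under the integral sign is valid, i.e. the entropy H(t) = −∫_ℝ f(x,t) log f(x,t) dx is differentiable with H′(t) = −∫_ℝ ∂/∂t [f(x,t) log f(x,t)] dx. Then for every t ∈ I, H′(t) = −a² ∫_ℝ (∂f/∂x(x,t))² / f(x,t) dx, and H′(t) < 0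 whenever ∂f/∂x(·, t) is not almost everywhere zero; in particular H′(t) < 0 always holds, since a positive integrable probability density on ℝ cannot have almost everywhere vanishing derivative. -/
open MeasureTheory Real Filter Topology

/-- Entropy dissipation for the one-dimensional anti-diffusion equation.
Let `f(x,t)` be positive and smooth on `ℝ × I` (`I` an open interval), a probability
density in `x` for each `t ∈ I`, satisfying `∂f/∂t + a² ∂²f/∂x² = 0`. Under the stated
integrability, boundary-decay and differentiation-under-the-integral hypotheses, the
entropy `H(t) = −∫ f log f dx` satisfies `H′(t) = −a² ∫ (∂f/∂x)²/f dx` for every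
`t ∈ I`, with `H′(t) < 0` whenever `∂f/∂x(·,t)` is not a.e. zero — and in particular
`H′(t) < 0` always holds. -/
theorem entropy_strictly_decreasing_one_dim (a : ℝ) (ha : 0 < a)
    (t₁ t₂ : ℝ) (f : ℝ → ℝ → ℝ)
    (hsmooth : ContDiff ℝ (⊤ : ℕ∞) (fun p : ℝ × ℝ => f p.1 p.2))
    (hpos : ∀ x : ℝ, ∀ t ∈ Set.Ioo t₁ t₂, 0 < f x t)
    (hdens : ∀ t ∈ Set.Ioo t₁ t₂, (∫ x : ℝ, f x t) = 1)
    (hpde : ∀ x : ℝ, ∀ t ∈ Set.Ioo t₁ t₂,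
      deriv (fun s => f x s) t + a ^ 2 * deriv (deriv (fun y => f y t)) x = 0)
    (hint1 : ∀ t ∈ Set.Ioo t₁ t₂,
      Integrable (fun x => f x t * Real.log (f x t)))
    (hint2 : ∀ t ∈ Set.Ioo t₁ t₂,
      Integrable (fun x => (1 + Real.log (f x t)) * deriv (deriv (fun y => f y t)) x))
    (hint3 : ∀ t ∈ Set.Ioo t₁ t₂,
      Integrable (fun x => (deriv (fun y => f y t) x) ^ 2 / f x t))
    (hbdrytop : ∀ t ∈ Set.Ioo t₁ t₂,
      Tendsto (fun x => (1 + Real.log (f x t)) * deriv (fun y => f y t) x) atTop (𝓝 0))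
    (hbdrybot : ∀ t ∈ Set.Ioo t₁ t₂,
      Tendsto (fun x => (1 + Real.log (f x t)) * deriv (fun y => f y t) x) atBot (𝓝 0))
    (H : ℝ → ℝ) (hH : ∀ t, H t = -∫ x : ℝ, f x t * Real.log (f x t))
    (hdiff : ∀ t ∈ Set.Ioo t₁ t₂,
      HasDerivAt H (-∫ x : ℝ, deriv (fun s => f x s * Real.log (f x s)) t) t) :
    ∀ t ∈ Set.Ioo t₁ t₂,
      (deriv H t = -a ^ 2 * ∫ x : ℝ, (deriv (fun y => f y t) x) ^ 2 / f x t) ∧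
      ((¬ ∀ᵐ x : ℝ, deriv (fun y => f y t) x = 0) → deriv H t < 0) ∧
      deriv H t < 0 := by
  intro t ht
  -- smoothness of x ↦ f x t
  have hu : ContDiff ℝ (⊤ : ℕ∞) (fun y => f y t) := by
    have : (fun y => f y t) = (fun p : ℝ × ℝ => f p.1 p.2) ∘ (fun y => (y, t)) := rfl
    rw [this]
    exact hsmooth.comp (contDiff_id.prodMk contDiff_const)
  have hux := (contDiff_infty_iff_deriv.mp (hu.of_le (by simp))).2
  have hD : ∀ x, HasDerivAt (fun y => f y t) (deriv (fun y => f y t) x) x :=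
    fun x => (hu.differentiable (by simp) x).hasDerivAt
  have hDD : ∀ x, HasDerivAt (deriv (fun y => f y t))
      (deriv (deriv (fun y => f y t)) x) x :=
    fun x => (hux.differentiable (by simp) x).hasDerivAt
  -- integration by parts on the whole line
  have hg : ∀ x, HasDerivAt
      (fun x => (1 + Real.log (f x t)) * deriv (fun y => f y t) x)
      ((deriv (fun y => f y t) x) ^ 2 / f x t
        + (1 + Real.log (f x t)) * deriv (deriv (fun y => f y t)) x) x := by
    intro x
    have h1 : HasDerivAt (fun y => 1 + Real.log (f y t))
        (deriv (fun y => f y t) x / f x t) x := by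
      have hl := (Real.hasDerivAt_log (hpos x t ht).ne').comp x (hD x)
      have := (hasDerivAt_const x (1 : ℝ)).add hl
      exact this.congr_deriv (by ring)
    have := h1.mul (hDD x)
    refine this.congr_deriv ?_
    have hne := (hpos x t ht).ne'
    ring
  have hg'int : Integrable (fun x =>
      (deriv (fun y => f y t) x) ^ 2 / f x t
        + (1 + Real.log (f x t)) * deriv (deriv (fun y => f y t)) x) :=
    (hint3 t ht).add (hint2 t ht)
  have hIBP0 : (∫ x : ℝ, ((deriv (fun y => f y t) x) ^ 2 / f x t
        + (1 + Real.log (f x t)) * deriv (deriv (fun y => f y t)) x)) = 0 := by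
    have := integral_of_hasDerivAt_of_tendsto hg hg'int (hbdrybot t ht) (hbdrytop t ht)
    simpa using this
  have hsplit := integral_add (hint3 t ht) (hint2 t ht)
  have key : (∫ x : ℝ, (1 + Real.log (f x t)) * deriv (deriv (fun y => f y t)) x)
      = -∫ x : ℝ, (deriv (fun y => f y t) x) ^ 2 / f x t := by
    rw [hsplit] at hIBP0
    linarith
  -- time derivative of f log f
  have hts : ∀ x, HasDerivAt (fun s => f x s) (deriv (fun s => f x s) t) t := by
    intro x
    have h : (fun s => f x s) = (fun p : ℝ × ℝ => f p.1 p.2) ∘ (fun s => (x, s)) := rfl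
    have : ContDiff ℝ (⊤ : ℕ∞) (fun s => f x s) := by
      rw [h]; exact hsmooth.comp (contDiff_const.prodMk contDiff_id)
    exact (this.differentiable (by simp) t).hasDerivAt
  have hft : ∀ x, deriv (fun s => f x s) t
      = -(a ^ 2) * deriv (deriv (fun y => f y t)) x := by
    intro x
    have := hpde x t ht
    linarith
  have hderiv_t : ∀ x, deriv (fun s => f x s * Real.log (f x s)) t
      = -(a ^ 2) * ((1 + Real.log (f x t)) * deriv (deriv (fun y => f y t)) x) := by
    intro x
    have h1 := hts x
    have h2 := (Real.hasDerivAt_log (hpos x t ht).ne').comp t h1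
    have h3 := h1.mul h2
    simp only [Function.comp_def, Pi.mul_def] at h3
    rw [h3.deriv, hft x]
    have hne := (hpos x t ht).ne'
    field_simp
    ring
  have hI : (∫ x : ℝ, deriv (fun s => f x s * Real.log (f x s)) t)
      = -(a ^ 2) * ∫ x : ℝ, (1 + Real.log (f x t)) * deriv (deriv (fun y => f y t)) x := by
    rw [← integral_const_mul]
    exact integral_congr_ae (Filter.Eventually.of_forall fun x => hderiv_t x)
  have hH' : deriv H t = -a ^ 2 * ∫ x : ℝ, (deriv (fun y => f y t) x) ^ 2 / f x t := by
    rw [(hdiff t ht).deriv, hI, key]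
    ring
  -- positivity of the Fisher-type integral
  set J := ∫ x : ℝ, (deriv (fun y => f y t) x) ^ 2 / f x t with hJ
  have hJnn : 0 ≤ J :=
    integral_nonneg fun x => div_nonneg (sq_nonneg _) (hpos x t ht).le
  have hJpos : (¬ ∀ᵐ x : ℝ, deriv (fun y => f y t) x = 0) → 0 < J := by
    intro hnae
    rcases lt_or_eq_of_le hJnn with h | h
    · exact h
    · exfalso
      apply hnae
      have h0 : (fun x => (deriv (fun y => f y t) x) ^ 2 / f x t) =ᵐ[volume]
          (0 : ℝ → ℝ) := by
        rw [← integral_eq_zero_iff_of_nonneg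
          (fun x => div_nonneg (sq_nonneg _) (hpos x t ht).le) (hint3 t ht)]
        exact h.symm
      filter_upwards [h0] with x hx
      have hne := (hpos x t ht).ne'
      simp [hne] at hx
      exact hx
  have hnae : ¬ ∀ᵐ x : ℝ, deriv (fun y => f y t) x = 0 := by
    intro hae
    have hzero : deriv (fun y => f y t) = (fun _ => (0 : ℝ)) :=
      (hux.continuous.ae_eq_iff_eq volume continuous_const).mp hae
    have hconst : ∀ x : ℝ, f x t = f 0 t := by
      intro x
      exact is_const_of_deriv_eq_zero (hu.differentiable (by simp))
        (fun y => by rw [hzero]) x 0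
    have h1 : (∫ x : ℝ, f x t) = ∫ _ : ℝ, f 0 t :=
      integral_congr_ae (Filter.Eventually.of_forall hconst)
    rw [hdens t ht] at h1
    simp [integral_const, Measure.real, Real.volume_univ] at h1
  refine ⟨hH', fun hn => ?_, ?_⟩
  · rw [hH']
    have := hJpos hn
    nlinarith [sq_nonneg a, pow_pos ha 2]
  · rw [hH']
    have := hJpos hnae
    nlinarith [pow_pos ha 2]
end
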